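/- Let A ∈ ℝ^{n×n} satisfy eᵢᵀA = 0 (i.e., ℓᵢ = 0 for node i), and let W(p,T) be the finite-time Gramian with W(p,T) positive definite, where p has entries pⱼ ≥ 0 with pᵢ > 0. Then tr(W(p,T)⁻¹) ≥ 1/(pᵢ T), and consequently for any fixed ε > 0, if tr(W(p,T)⁻¹) ≤ ε then pᵢ ≥ 1/(εT). -/

import Mathlib

/-!
Since row `i` of `A` vanishes, row `i` of `exp (t • A)` is the `i`-th unit row for every
`t`, so the `(i, i)` entry of the Gramian integrand is `p i` and `W i i = p i * T`. For a positive
definite `W`, Cauchy–Schwarz for the form `W` applied to `eᵢ` and `W⁻¹ eᵢ` gives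
`1 ≤ W i i * (W⁻¹) i i`, and the trace of the positive definite `W⁻¹` dominates its `(i, i)` entry.
-/

open Matrix NormedSpace

attribute [local instance] Matrix.linftyOpNormedAddCommGroup Matrix.linftyOpNormedSpace

theorem NormedSpace.mul_exp_eq_of_mul_eq_zero {𝔸 : Type*} [NormedRing 𝔸] [NormedAlgebra ℚ 𝔸]
    [CompleteSpace 𝔸] {a x : 𝔸} (h : a * x = 0) : a * exp x = a := by
  have hterm : ∀ k ≠ 0, a * ((k.factorial⁻¹ : ℚ) • x ^ k) = 0 := by
    intro k hk
    obtain ⟨k, rfl⟩ := Nat.exists_eq_succ_of_ne_zero hk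
    rw [pow_succ', mul_smul_comm, ← mul_assoc, h, zero_mul, smul_zero]
  refine ((exp_series_hasSum_exp' (𝕂 := ℚ) x).mul_left a).unique ?_
  simpa using hasSum_single 0 hterm

namespace Matrix

theorem intervalIntegral_apply {m n : Type*} [Fintype m] [Fintype n] {f : ℝ → Matrix m n ℝ}
    (hf : Continuous f) (a b : ℝ) (μ : MeasureTheory.Measure ℝ)
    [MeasureTheory.IsLocallyFiniteMeasure μ] (i : m) (j : n) :
    (∫ t in a..b, f t ∂μ) i j = ∫ t in a..b, f t i j ∂μ := by
  -- The topology of the `L∞` operator norm is only propositionally the product topology,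
  -- so this instance has to be supplied by hand.
  let _ : ENormedAddMonoid (Matrix m n ℝ) :=
    NormedAddCommGroup.toENormedAddCommMonoid.toENormedAddMonoid
  exact ((entryLinearMap ℝ ℝ i j).toContinuousLinearMap.intervalIntegral_comp_comm
    (hf.intervalIntegrable a b)).symm

variable {ι : Type*} [Fintype ι] [DecidableEq ι]

theorem PosDef.one_le_apply_self_mul_inv_apply_self {W : Matrix ι ι ℝ} (hW : W.PosDef) (i : ι) :
    1 ≤ W i i * W⁻¹ i i := by
  set e : ι → ℝ := Pi.single i 1
  set y := W⁻¹ *ᵥ e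
  have hWy : W *ᵥ y = e := by
    rw [mulVec_mulVec, mul_nonsing_inv _ ((isUnit_iff_isUnit_det W).mp hW.isUnit), one_mulVec]
  have hsymm : W.toBilin'.IsSymm := isSymm_toBilin'_iff_isSymm.mpr hW.isHermitian
  have hcs := W.toBilin'.apply_sq_le_of_symm
    (fun x => by simpa [toBilin'_apply'] using hW.posSemidef.dotProduct_mulVec_nonneg x)
    (LinearMap.BilinForm.isSymm_iff.mp hsymm) e y
  simp only [toBilin'_apply', hWy] at hcs
  simpa [e, y] using hcs

theorem PosDef.one_div_apply_self_le_trace_inv {W : Matrix ι ι ℝ} (hW : W.PosDef) (i : ι) :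
    1 / W i i ≤ W⁻¹.trace :=
  calc 1 / W i i ≤ W⁻¹ i i :=
        (div_le_iff₀' hW.diag_pos).2 (hW.one_le_apply_self_mul_inv_apply_self i)
    _ ≤ W⁻¹.trace :=
        Finset.single_le_sum (f := fun j => W⁻¹ j j)
          (fun _ _ => hW.inv.posSemidef.diag_nonneg) (Finset.mem_univ i)

theorem mul_diagonal_mul_transpose_apply_self_of_row_eq_one {R : Type*} [CommSemiring R]
    {M : Matrix ι ι R} {i : ι} (hM : M i = (1 : Matrix ι ι R) i) (p : ι → R) :
    (M * diagonal p * Mᵀ) i i = p i := by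
  simp [mul_apply, congrFun hM, one_apply]

noncomputable def finiteTimeGramian (A : Matrix ι ι ℝ) (p : ι → ℝ) (T : ℝ) : Matrix ι ι ℝ :=
  ∫ t in (0:ℝ)..T, exp (t • A) * diagonal p * exp (t • Aᵀ)

section LinftyOpNormedAlgebra

attribute [local instance] Matrix.linftyOpNormedRing Matrix.linftyOpNormedAlgebra

theorem exp_row_eq_of_row_eq_zero {𝕜 : Type*} [RCLike 𝕜] {M : Matrix ι ι 𝕜} {i : ι}
    (hM : M i = 0) : exp M i = (1 : Matrix ι ι 𝕜) i := by
  have hmul : single i i (1 : 𝕜) * M = 0 := by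
    ext a b
    rcases eq_or_ne a i with rfl | ha
    · simp [congrFun hM b]
    · simp [ha]
  ext j
  have h := congr_arg (fun N : Matrix ι ι 𝕜 => N i j) (mul_exp_eq_of_mul_eq_zero hmul)
  simp only [single_mul_apply_same, one_mul] at h
  -- `h` is about `exp` for the norm topology, which `rw` cannot match against the goal.
  exact h.trans (by simp [single_apply, one_apply])

theorem finiteTimeGramian_apply_self_of_row_eq_zero {A : Matrix ι ι ℝ} {i : ι} (hA : A i = 0)
    (p : ι → ℝ) (T : ℝ) : finiteTimeGramian A p T i i = p i * T := by
  have hcont : Continuous fun t : ℝ => exp (t • A) * diagonal p * exp (t • Aᵀ) := by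
    fun_prop
  have hentry (t : ℝ) : (exp (t • A) * diagonal p * exp (t • Aᵀ)) i i = p i := by
    rw [← transpose_smul, exp_transpose]
    exact mul_diagonal_mul_transpose_apply_self_of_row_eq_one
      (exp_row_eq_of_row_eq_zero (by ext j; simp [congrFun hA j])) p
  rw [finiteTimeGramian, intervalIntegral_apply hcont]
  simp [hentry, mul_comm]

end LinftyOpNormedAlgebra

end Matrix

theorem aecs_lower_bound_zero_self_loop_general {n : ℕ} (A : Matrix (Fin n) (Fin n) ℝ)
    (i : Fin n) (hA : A i = 0)
    (p : Fin n → ℝ) (T : ℝ) (hT : 0 < T)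
    (hW : (∫ t in (0:ℝ)..T,
        exp (t • A) * Matrix.diagonal p * exp (t • Aᵀ)).PosDef) :
    1 / (p i * T) ≤
      Matrix.trace (∫ t in (0:ℝ)..T,
        exp (t • A) * Matrix.diagonal p * exp (t • Aᵀ))⁻¹ ∧
    ∀ ε : ℝ, 0 < ε →
      Matrix.trace (∫ t in (0:ℝ)..T,
        exp (t • A) * Matrix.diagonal p * exp (t • Aᵀ))⁻¹ ≤ ε →
      1 / (ε * T) ≤ p i := by
  change (finiteTimeGramian A p T).PosDef at hW
  change 1 / (p i * T) ≤ (finiteTimeGramian A p T)⁻¹.trace ∧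
    ∀ ε : ℝ, 0 < ε → (finiteTimeGramian A p T)⁻¹.trace ≤ ε → 1 / (ε * T) ≤ p i
  have hWii := finiteTimeGramian_apply_self_of_row_eq_zero hA p T
  have hbound : 1 / (p i * T) ≤ (finiteTimeGramian A p T)⁻¹.trace :=
    hWii ▸ hW.one_div_apply_self_le_trace_inv i
  refine ⟨hbound, fun ε hε hle => ?_⟩
  have hpos : 0 < p i * T := hWii ▸ hW.diag_pos
  have hεpT : 1 ≤ p i * T * ε := (div_le_iff₀' hpos).1 (hbound.trans hle)
  rw [div_le_iff₀ (by positivity)]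
  linarith

theorem aecs_lower_bound_zero_self_loop {n : ℕ} (A : Matrix (Fin n) (Fin n) ℝ)
    (i : Fin n) (hA : A i = 0)
    (p : Fin n → ℝ) (hp : ∀ j, 0 ≤ p j) (hpi : 0 < p i) (T : ℝ) (hT : 0 < T)
    (hW : (∫ t in (0:ℝ)..T,
        exp (t • A) * Matrix.diagonal p * exp (t • Aᵀ)).PosDef) :
    1 / (p i * T) ≤
      Matrix.trace (∫ t in (0:ℝ)..T,
        exp (t • A) * Matrix.diagonal p * exp (t • Aᵀ))⁻¹ ∧
    ∀ ε : ℝ, 0 < ε →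
      Matrix.trace (∫ t in (0:ℝ)..T,
        exp (t • A) * Matrix.diagonal p * exp (t • Aᵀ))⁻¹ ≤ ε →
      1 / (ε * T) ≤ p i :=
  aecs_lower_bound_zero_self_loop_general A i hA p T hT hW
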